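/- Let $q = p^r$, $r \geq 1$, and suppose $f_1(t) \in 1 + t^q\,\mathbb{F}_p[[t^q]]$ (a power series in $t^q$ with constant term 1) and $f_2(t) \in 1 + t^l\,\mathbb{F}_p[[t]]$ for some $l \geq 1$. Then $(t f_1(t)) \circ (t f_2(t)) \equiv t f_1(t) f_2(t) \pmod{t^{1+q(l+1)}\,\mathbb{F}_p[[t]]}$. -/

import Mathlib

open PowerSeries

/-- Composition of power series `f ∘ g` (intended for `g` with zero constant term). -/
noncomputable def pcomp {k : Type} [CommRing k] (f g : PowerSeries k) : PowerSeries k :=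
  PowerSeries.mk fun n =>
    PowerSeries.coeff (R := k) n (Polynomial.eval₂ (PowerSeries.C (R := k)) g (PowerSeries.trunc (n + 1) f))

/-- `n`-fold compositional iterate of `f`. -/
noncomputable def pcompIter {k : Type} [CommRing k] (f : PowerSeries k) : ℕ → PowerSeries k
  | 0 => PowerSeries.X
  | n + 1 => pcomp f (pcompIter f n)

/-- Membership in the Nottingham group: `f = t + a₂ t² + ⋯`. -/
def IsNott {k : Type} [CommRing k] (f : PowerSeries k) : Prop :=
  PowerSeries.coeff (R := k) 0 f = 0 ∧ PowerSeries.coeff (R := k) 1 f = 1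

lemma coeff_pcomp {k : Type} [CommRing k] (f g : PowerSeries k) (m : ℕ) :
    PowerSeries.coeff (R := k) m (pcomp f g)
      = ∑ i ∈ Finset.range (m + 1), PowerSeries.coeff (R := k) i f * PowerSeries.coeff (R := k) m (g ^ i) := by
  rw [pcomp, PowerSeries.coeff_mk,
    Polynomial.eval₂_eq_sum_range' (PowerSeries.C (R := k)) (PowerSeries.natDegree_trunc_lt f m) g,
    map_sum]
  refine Finset.sum_congr rfl fun i hi => ?_
  rw [PowerSeries.coeff_trunc]
  simp [Finset.mem_range.mp hi]

theorem stmt15 (p : ℕ) [Fact p.Prime] (r : ℕ) (hr : 1 ≤ r) (q : ℕ) (hq : q = p ^ r)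
    (l : ℕ) (hl : 1 ≤ l) (f1 f2 : PowerSeries (ZMod p))
    (hf1c : PowerSeries.coeff (R := ZMod p) 0 f1 = 1)
    (hf1 : ∀ m, ¬ q ∣ m → PowerSeries.coeff (R := ZMod p) m f1 = 0)
    (hf2c : PowerSeries.coeff (R := ZMod p) 0 f2 = 1)
    (hf2 : ∀ m, 1 ≤ m → m < l → PowerSeries.coeff (R := ZMod p) m f2 = 0) :
    ∀ m, m < 1 + q * (l + 1) →
      PowerSeries.coeff (R := ZMod p) m (pcomp (PowerSeries.X * f1) (PowerSeries.X * f2))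
        = PowerSeries.coeff (R := ZMod p) m (PowerSeries.X * f1 * f2) := by
  have hq1 : 2 ≤ q := by
    rw [hq]
    calc 2 ≤ p := (Fact.out : p.Prime).two_le
    _ ≤ p ^ r := Nat.le_self_pow (by omega) p
  -- X^l ∣ f2 - 1
  have hs : (PowerSeries.X : PowerSeries (ZMod p)) ^ l ∣ (f2 - 1) := by
    rw [PowerSeries.X_pow_dvd_iff]
    intro m hm
    rcases Nat.eq_zero_or_pos m with h0 | h1
    · subst h0
      rw [map_sub, show ((1:(PowerSeries (ZMod p)))) = PowerSeries.C (R := ZMod p) 1 from by simp]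
      simp [hf2c]
    · rw [map_sub, hf2 m h1 hm, PowerSeries.coeff_one, if_neg (by omega)]
      simp
  -- X^(q*l) ∣ f2^q - 1
  haveI hcp : CharP ((PowerSeries (ZMod p))) p := by
    constructor
    intro n
    rw [← map_natCast (PowerSeries.C (R := ZMod p)) n]
    constructor
    · intro h
      have := congrArg (PowerSeries.constantCoeff (R := ZMod p)) h
      simpa [CharP.cast_eq_zero_iff (ZMod p) p] using this
    · intro h
      rw [(CharP.cast_eq_zero_iff (ZMod p) p n).mpr h, map_zero]
  have hq2 : (PowerSeries.X : PowerSeries (ZMod p)) ^ (q * l) ∣ (f2 ^ q - 1) := by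
    have h1 : f2 ^ q - 1 = (f2 - 1) ^ q := by
      rw [hq, sub_pow_char_pow f2 (1 : PowerSeries (ZMod p)) r, one_pow]
    rw [h1, mul_comm q l, pow_mul]
    exact pow_dvd_pow_of_dvd hs q
  -- key: coeff n (f2 ^ i) = coeff n f2 when q ∣ i - 1, 1 ≤ i, n < q*l
  have key : ∀ i n, q ∣ (i - 1) → 1 ≤ i → n < q * l →
      PowerSeries.coeff (R := ZMod p) n (f2 ^ i) = PowerSeries.coeff (R := ZMod p) n f2 := by
    rintro i n ⟨j, hj⟩ hi1 hn
    have hi : i = 1 + q * j := by omega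
    have hdvd : (PowerSeries.X : PowerSeries (ZMod p)) ^ (q * l) ∣ (f2 ^ i - f2) := by
      have heq : f2 ^ i - f2 = f2 * ((f2 ^ q) ^ j - 1) := by
        rw [hi, pow_add, pow_mul, pow_one]; ring
      rw [heq]
      have h2 : (f2 ^ q - 1) ∣ ((f2 ^ q) ^ j - 1) := by
        simpa using sub_dvd_pow_sub_pow (f2 ^ q) 1 j
      exact Dvd.dvd.mul_left (hq2.trans h2) f2
    have := (PowerSeries.X_pow_dvd_iff.mp hdvd) n hn
    rw [map_sub, sub_eq_zero] at this
    exact this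
  intro m hm
  rw [coeff_pcomp]
  rcases Nat.eq_zero_or_pos m with h0 | h1
  · subst h0
    simp [PowerSeries.coeff_zero_eq_constantCoeff, mul_assoc]
  obtain ⟨n, rfl⟩ : ∃ n, m = n + 1 := ⟨m - 1, by omega⟩
  -- LHS: drop the i = 0 term and shift the index
  rw [Finset.sum_range_succ']
  have hzero : PowerSeries.coeff (R := ZMod p) 0 (PowerSeries.X * f1)
      * PowerSeries.coeff (R := ZMod p) (n + 1) ((PowerSeries.X * f2) ^ 0) = 0 := by
    simp [PowerSeries.coeff_zero_eq_constantCoeff]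
  rw [hzero, add_zero]
  -- RHS
  rw [mul_assoc, PowerSeries.coeff_succ_X_mul, PowerSeries.coeff_mul,
    Finset.Nat.sum_antidiagonal_eq_sum_range_succ_mk]
  refine Finset.sum_congr rfl fun i hi => ?_
  have hin : i ≤ n := Nat.lt_succ_iff.mp (Finset.mem_range.mp hi)
  rw [PowerSeries.coeff_succ_X_mul]
  have hpow : (PowerSeries.X * f2) ^ (i + 1) = PowerSeries.X ^ (i + 1) * f2 ^ (i + 1) := by
    rw [mul_pow]
  rw [hpow]
  have hsplit : n + 1 = (n - i) + (i + 1) := by omega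
  rw [hsplit, PowerSeries.coeff_X_pow_mul]
  by_cases hdvd : q ∣ i
  · rcases Nat.eq_zero_or_pos i with hi0 | hi1
    · subst hi0; simp
    · have hiq : q ≤ i := Nat.le_of_dvd hi1 hdvd
      have hql : q * (l + 1) = q * l + q := by ring
      have : n - i < q * l := by omega
      rw [key (i + 1) (n - i) (by simpa using hdvd) (by omega) this]
  · rw [hf1 i hdvd, zero_mul, zero_mul]
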